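/- arXiv:1804.02071 — 3 statements merged into one kernel-verified Lean document; each statement's English description precedes it below -/
import Mathlib

section
/- Let $1 \le k \le n$ and let $\{X_i^j : 1 \le i \le n, 1 \le j \le k\}$ be independent random variables. For each $(i_1,\ldots,i_k) \in I_n^k$ let $\Phi_{i_1,\ldots,i_k} : S^k \to \mathbb{R}$ be measurable. Then $\log \mathbb{E} \exp\Big( \frac{(n-k)!}{n!} \sum_{(i_1,\ldots,i_k)\in I_n^k} \Phi_{i_1,\ldots,i_k}(X_{i_1}^1,\ldots,X_{i_k}^k) \Big) \le \frac{(n-k+1)!}{n!} \sum_{(i_1,\ldots,i_k)\in I_n^k} \log \mathbb{E} \exp\Big( \frac{1}{n-k+1} \Phi_{i_1,\ldots,i_k}(X_{i_1}^1,\ldots,X_{i_k}^k) \Big)$, provided the relevant exponential moments are finite. -/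
open MeasureTheory ProbabilityTheory Real Filter Topology

/-!
For a permutation `σ` of `Fin n`, the `n - k + 1` sliding windows `j ↦ σ (t + j)` are tuples of
`I_n^k` whose `j`-th entries are pairwise distinct, so the terms `Φ(X_{σ t}^1, …, X_{σ (t+k-1)}^k)`
they index are independent and the log-Laplace transform of their sum splits into a sum. Every
tuple of `I_n^k` occurs equally often among the windows of all `σ`, so the normalised U-statistic
is the uniform average over `σ` of the window sums divided by `n - k + 1`; Hölder's inequality,
i.e. convexity of `Z ↦ log E exp Z`, bounds its log-Laplace transform by the average of those of
the window sums.
-/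

theorem MulAction.card_nsmul_sum_smul {G X M : Type*} [Group G] [MulAction G X] [Fintype G]
    [Fintype X] [IsPretransitive G X] [AddCommMonoid M] (f : X → M) (x : X) :
    Fintype.card X • ∑ g : G, f (g • x) = Fintype.card G • ∑ y, f y := by
  have hconst (y : X) : ∑ g : G, f (g • y) = ∑ g : G, f (g • x) := by
    obtain ⟨a, rfl⟩ := exists_smul_eq G x y
    simp_rw [smul_smul]
    exact Fintype.sum_equiv (Equiv.mulRight a) _ _ fun _ => rfl
  calc Fintype.card X • ∑ g : G, f (g • x) = ∑ y : X, ∑ g : G, f (g • y) := by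
        simp [hconst]
    _ = ∑ g : G, ∑ y, f (g • y) := Finset.sum_comm
    _ = ∑ _g : G, ∑ y, f y := by
        refine Finset.sum_congr rfl fun g _ => ?_
        exact Fintype.sum_equiv (MulAction.toPerm g) _ _ fun _ => rfl
    _ = Fintype.card G • ∑ y, f y := by simp

theorem ProbabilityTheory.iIndepFun.curry {Ω ι κ 𝓧 : Type*} {mΩ : MeasurableSpace Ω}
    {μ : Measure Ω} [MeasurableSpace 𝓧] {Y : ι → κ → Ω → 𝓧}
    (hY : ∀ i j, Measurable (Y i j)) (h : iIndepFun (fun p : ι × κ => Y p.1 p.2) μ) :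
    iIndepFun (fun i ω j => Y i j ω) μ := by
  have := h.isProbabilityMeasure
  have (i : ι) (j : κ) : IsProbabilityMeasure (μ.map (Y i j)) :=
    Measure.isProbabilityMeasure_map (hY i j).aemeasurable
  rw [iIndepFun_iff_map_fun_eq_infinitePi_map fun i => measurable_pi_lambda _ (hY i)]
  have hrow (i : ι) : μ.map (fun ω j => Y i j ω) = Measure.infinitePi fun j => μ.map (Y i j) :=
    (h.precomp (Prod.mk_right_injective i)).map_fun_eq_infinitePi_map (hY i)
  simp_rw [hrow]
  have hjoint : μ.map (fun ω (p : ι × κ) => Y p.1 p.2 ω) =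
      Measure.infinitePi fun p : ι × κ => μ.map (Y p.1 p.2) :=
    h.map_fun_eq_infinitePi_map fun p => hY p.1 p.2
  rw [← Measure.infinitePi_map_curry, ← hjoint,
    Measure.map_map (by fun_prop) (by fun_prop)]
  rfl

section ExpConvexity

variable {Ω ι : Type*} {mΩ : MeasurableSpace Ω} {μ : Measure Ω} {s : Finset ι} {p : ι → ℝ}
  {Z : ι → Ω → ℝ}

theorem aemeasurable_of_integrable_exp {f : Ω → ℝ} (hf : Integrable (fun ω => exp (f ω)) μ) :
    AEMeasurable f μ := by
  simpa using hf.aemeasurable.log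

theorem lintegral_ofReal_exp_sum_mul_le (hp : ∀ i ∈ s, 0 ≤ p i) (hp1 : ∑ i ∈ s, p i = 1)
    (hZ : ∀ i ∈ s, Integrable (fun ω => exp (Z i ω)) μ) :
    ∫⁻ ω, ENNReal.ofReal (exp (∑ i ∈ s, p i * Z i ω)) ∂μ
      ≤ ENNReal.ofReal (∏ i ∈ s, (∫ ω, exp (Z i ω) ∂μ) ^ p i) := by
  have hprod (ω : Ω) : ENNReal.ofReal (exp (∑ i ∈ s, p i * Z i ω))
      = ∏ i ∈ s, ENNReal.ofReal (exp (Z i ω)) ^ p i := by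
    simp_rw [exp_sum, ENNReal.ofReal_prod_of_nonneg fun i _ => (exp_pos _).le, mul_comm (p _),
      exp_mul, ENNReal.ofReal_rpow_of_pos (exp_pos _)]
  simp_rw [hprod]
  refine (ENNReal.lintegral_prod_norm_pow_le s
    (fun i hi => (aemeasurable_of_integrable_exp (hZ i hi)).exp.ennreal_ofReal) hp1 hp).trans_eq ?_
  rw [ENNReal.ofReal_prod_of_nonneg fun i _ => by positivity]
  refine Finset.prod_congr rfl fun i hi => ?_
  rw [← ofReal_integral_eq_lintegral_ofReal (hZ i hi) (ae_of_all _ fun _ => (exp_pos _).le),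
    ENNReal.ofReal_rpow_of_nonneg (integral_nonneg fun _ => (exp_pos _).le) (hp i hi)]

theorem integrable_exp_sum_mul (hp : ∀ i ∈ s, 0 ≤ p i) (hp1 : ∑ i ∈ s, p i = 1)
    (hZ : ∀ i ∈ s, Integrable (fun ω => exp (Z i ω)) μ) :
    Integrable (fun ω => exp (∑ i ∈ s, p i * Z i ω)) μ := by
  refine ⟨(Finset.aemeasurable_fun_sum s fun i hi =>
    (aemeasurable_of_integrable_exp (hZ i hi)).const_mul (p i)).exp.aestronglyMeasurable, ?_⟩
  rw [hasFiniteIntegral_iff_ofReal (ae_of_all _ fun _ => (exp_pos _).le)]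
  exact (lintegral_ofReal_exp_sum_mul_le hp hp1 hZ).trans_lt ENNReal.ofReal_lt_top

theorem integral_exp_sum_mul_le (hp : ∀ i ∈ s, 0 ≤ p i) (hp1 : ∑ i ∈ s, p i = 1)
    (hZ : ∀ i ∈ s, Integrable (fun ω => exp (Z i ω)) μ) :
    ∫ ω, exp (∑ i ∈ s, p i * Z i ω) ∂μ ≤ ∏ i ∈ s, (∫ ω, exp (Z i ω) ∂μ) ^ p i := by
  rw [integral_eq_lintegral_of_nonneg_ae (ae_of_all _ fun _ => (exp_pos _).le)
    (integrable_exp_sum_mul hp hp1 hZ).aestronglyMeasurable]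
  exact ENNReal.toReal_le_of_le_ofReal (Finset.prod_nonneg fun i _ => by positivity)
    (lintegral_ofReal_exp_sum_mul_le hp hp1 hZ)

theorem log_integral_exp_sum_mul_le [NeZero μ] (hp : ∀ i ∈ s, 0 ≤ p i)
    (hp1 : ∑ i ∈ s, p i = 1) (hZ : ∀ i ∈ s, Integrable (fun ω => exp (Z i ω)) μ) :
    log (∫ ω, exp (∑ i ∈ s, p i * Z i ω) ∂μ) ≤ ∑ i ∈ s, p i * log (∫ ω, exp (Z i ω) ∂μ) := by
  have hpos (i : ι) (hi : i ∈ s) : 0 < ∫ ω, exp (Z i ω) ∂μ := integral_exp_pos (hZ i hi)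
  calc log (∫ ω, exp (∑ i ∈ s, p i * Z i ω) ∂μ)
      ≤ log (∏ i ∈ s, (∫ ω, exp (Z i ω) ∂μ) ^ p i) :=
        log_le_log (integral_exp_pos (integrable_exp_sum_mul hp hp1 hZ))
          (integral_exp_sum_mul_le hp hp1 hZ)
    _ = ∑ i ∈ s, p i * log (∫ ω, exp (Z i ω) ∂μ) := by
        rw [log_prod fun i hi => (rpow_pos_of_pos (hpos i hi) _).ne']
        exact Finset.sum_congr rfl fun i hi => log_rpow (hpos i hi) _

end ExpConvexity

def slidingWindow {n k : ℕ} (hkn : k ≤ n) (t : Fin (n - k + 1)) : Fin k ↪ Fin n where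
  toFun j := ⟨t + j, by omega⟩
  inj' i j h := Fin.ext (by simpa using h)

theorem injective_slidingWindow_apply {n k : ℕ} (hkn : k ≤ n) (j : Fin k) :
    Function.Injective fun t => slidingWindow hkn t j :=
  fun _ _ h => Fin.ext (Nat.add_right_cancel (congrArg Fin.val h))

theorem ProbabilityTheory.iIndepFun.curry_of_injective {Ω ι κ τ 𝓧 : Type*}
    {mΩ : MeasurableSpace Ω} {μ : Measure Ω} [MeasurableSpace 𝓧] {X : ι → κ → Ω → 𝓧}
    (hX : ∀ i j, Measurable (X i j)) (h : iIndepFun (fun p : ι × κ => X p.1 p.2) μ)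
    {e : τ → κ → ι} (he : ∀ j, Function.Injective fun t => e t j) :
    iIndepFun (fun t ω j => X (e t j) j ω) μ := by
  refine (h.precomp (g := fun q : τ × κ => (e q.1 q.2, q.2)) ?_).curry fun _ _ => hX _ _
  rintro ⟨t, j⟩ ⟨t', j'⟩ hq
  simp only [Prod.mk.injEq] at hq
  obtain ⟨hq, rfl⟩ := hq
  rw [he j hq]

theorem iIndepFun_slidingWindow {Ω S : Type*} {mΩ : MeasurableSpace Ω} [MeasurableSpace S]
    {μ : Measure Ω} {n k : ℕ} (hkn : k ≤ n) {X : Fin n → Fin k → Ω → S}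
    (hmeas : ∀ i j, Measurable (X i j)) (hindep : iIndepFun (fun p : Fin n × Fin k => X p.1 p.2) μ)
    {Φ : (Fin k ↪ Fin n) → (Fin k → S) → ℝ} (hΦ : ∀ e, Measurable (Φ e))
    (σ : Equiv.Perm (Fin n)) :
    iIndepFun (fun t ω => Φ (σ • slidingWindow hkn t)
      (fun j => X ((σ • slidingWindow hkn t) j) j ω)) μ :=
  (hindep.curry_of_injective hmeas fun j =>
    σ.injective.comp (injective_slidingWindow_apply hkn j)).comp _ fun _ => hΦ _

theorem sum_perm_sum_slidingWindow {n k : ℕ} (hkn : k ≤ n) (f : (Fin k ↪ Fin n) → ℝ) :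
    ∑ σ : Equiv.Perm (Fin n), ∑ t, f (σ • slidingWindow hkn t)
      = ((n : ℝ) - k + 1) * n.factorial / n.descFactorial k * ∑ e, f e := by
  have := Equiv.Perm.isMultiplyPretransitive (Fin n) k
  have hD : (n.descFactorial k : ℝ) ≠ 0 := by
    exact_mod_cast (Nat.descFactorial_pos.2 hkn).ne'
  have hwin (t : Fin (n - k + 1)) : ∑ σ : Equiv.Perm (Fin n), f (σ • slidingWindow hkn t)
      = n.factorial * (∑ e, f e) / n.descFactorial k := by
    rw [eq_div_iff hD, mul_comm]
    simpa [Fintype.card_embedding_eq, Fintype.card_perm] using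
      MulAction.card_nsmul_sum_smul (G := Equiv.Perm (Fin n)) f (slidingWindow hkn t)
  rw [Finset.sum_comm, Fintype.sum_congr _ _ hwin, Finset.sum_const, Finset.card_univ,
    Fintype.card_fin, nsmul_eq_mul]
  push_cast [Nat.cast_sub hkn]
  ring

theorem cast_descFactorial_eq_mul_descFactorial_sub_one {n k : ℕ} (hk : 1 ≤ k) (hkn : k ≤ n) :
    (n.descFactorial k : ℝ) = ((n : ℝ) - k + 1) * n.descFactorial (k - 1) := by
  obtain ⟨k, rfl⟩ := Nat.exists_eq_add_of_le' hk
  rw [Nat.descFactorial_succ, Nat.add_sub_cancel]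
  push_cast [Nat.cast_sub (by omega : k ≤ n)]
  ring

theorem decoupled_exp_log_ineq_general {Ω S : Type*} [MeasurableSpace Ω] [MeasurableSpace S]
    (μ : Measure Ω) [IsProbabilityMeasure μ] (n k : ℕ) (hk : 1 ≤ k) (hkn : k ≤ n)
    (X : Fin n → Fin k → Ω → S) (hmeas : ∀ i j, Measurable (X i j))
    (hindep : iIndepFun
      (fun p : Fin n × Fin k => X p.1 p.2) μ)
    (Φ : (Fin k ↪ Fin n) → (Fin k → S) → ℝ) (hΦ : ∀ e, Measurable (Φ e))
    (hint1 : ∀ e : Fin k ↪ Fin n,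
      Integrable (fun ω => exp (((n : ℝ) - k + 1)⁻¹ * Φ e (fun j => X (e j) j ω))) μ) :
    log (∫ ω, exp ((n.descFactorial k : ℝ)⁻¹ *
        ∑ e : Fin k ↪ Fin n, Φ e (fun j => X (e j) j ω)) ∂μ)
      ≤ (n.descFactorial (k - 1) : ℝ)⁻¹ * ∑ e : Fin k ↪ Fin n,
          log (∫ ω, exp (((n : ℝ) - k + 1)⁻¹ * Φ e (fun j => X (e j) j ω)) ∂μ) := by
  set c : ℝ := ((n : ℝ) - k + 1)⁻¹
  set Y : (Fin k ↪ Fin n) → Ω → ℝ := fun e ω => Φ e (fun j => X (e j) j ω)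
  have hwin (σ : Equiv.Perm (Fin n)) : iIndepFun (fun t => Y (σ • slidingWindow hkn t)) μ :=
    iIndepFun_slidingWindow hkn hmeas hindep hΦ σ
  have hY (e : Fin k ↪ Fin n) : Measurable (Y e) := by fun_prop
  have hcgf (σ : Equiv.Perm (Fin n)) :
      log (∫ ω, exp (c * ∑ t, Y (σ • slidingWindow hkn t) ω) ∂μ)
        = ∑ t, log (∫ ω, exp (c * Y (σ • slidingWindow hkn t) ω) ∂μ) := by
    simpa [cgf, mgf] using (hwin σ).cgf_sum (s := Finset.univ) (fun _ => hY _) fun _ _ => hint1 _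
  have hnk : (n : ℝ) - k + 1 ≠ 0 := by linarith [show (k : ℝ) ≤ n by exact_mod_cast hkn]
  calc log (∫ ω, exp ((n.descFactorial k : ℝ)⁻¹ * ∑ e, Y e ω) ∂μ)
      = log (∫ ω, exp (∑ σ : Equiv.Perm (Fin n),
          (n.factorial : ℝ)⁻¹ * (c * ∑ t, Y (σ • slidingWindow hkn t) ω)) ∂μ) := by
        congr 3 with ω
        rw [← Finset.mul_sum, ← Finset.mul_sum, sum_perm_sum_slidingWindow hkn fun e => Y e ω]
        simp only [c]
        field_simp
    _ ≤ ∑ σ : Equiv.Perm (Fin n),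
          (n.factorial : ℝ)⁻¹ * log (∫ ω, exp (c * ∑ t, Y (σ • slidingWindow hkn t) ω) ∂μ) := by
        refine log_integral_exp_sum_mul_le (fun _ _ => by positivity) ?_ fun σ _ => ?_
        · simp [Fintype.card_perm, Nat.factorial_ne_zero]
        · simpa using (hwin σ).integrable_exp_mul_sum (fun _ => hY _) fun _ _ => hint1 _
    _ = (n.descFactorial (k - 1) : ℝ)⁻¹ * ∑ e, log (∫ ω, exp (c * Y e ω) ∂μ) := by
        simp_rw [hcgf]
        rw [← Finset.mul_sum, sum_perm_sum_slidingWindow hkn fun e => log (∫ ω, exp (c * Y e ω) ∂μ),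
          cast_descFactorial_eq_mul_descFactorial_sub_one hk hkn]
        field_simp

/-- Exponential decoupled inequality (Lemma on decoupled `U`-statistics): for independent
random variables `X_i^j` (`1 ≤ i ≤ n`, `1 ≤ j ≤ k`) and measurable kernels `Φ_{i₁,…,i_k}`
indexed by tuples of pairwise distinct indices (embeddings `e : Fin k ↪ Fin n`),
`log E exp( ((n-k)!/n!) ∑_e Φ_e(X_{e 1}^1,…,X_{e k}^k) )
  ≤ ((n-k+1)!/n!) ∑_e log E exp( (n-k+1)⁻¹ Φ_e(X_{e 1}^1,…,X_{e k}^k) )`,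
provided the relevant exponential moments are finite.  Here `(n-k)!/n! = 1/(n)_k` and
`(n-k+1)!/n! = 1/(n)_{k-1}` with `(n)_j` the descending factorial. -/
theorem decoupled_exp_log_ineq {Ω S : Type*} [MeasurableSpace Ω] [MeasurableSpace S]
    (μ : Measure Ω) [IsProbabilityMeasure μ] (n k : ℕ) (hk : 1 ≤ k) (hkn : k ≤ n)
    (X : Fin n → Fin k → Ω → S) (hmeas : ∀ i j, Measurable (X i j))
    (hindep : iIndepFun
      (fun p : Fin n × Fin k => X p.1 p.2) μ)
    (Φ : (Fin k ↪ Fin n) → (Fin k → S) → ℝ) (hΦ : ∀ e, Measurable (Φ e))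
    (hint1 : ∀ e : Fin k ↪ Fin n,
      Integrable (fun ω => exp (((n : ℝ) - k + 1)⁻¹ * Φ e (fun j => X (e j) j ω))) μ)
    (hint2 : Integrable (fun ω =>
      exp ((n.descFactorial k : ℝ)⁻¹ * ∑ e : Fin k ↪ Fin n, Φ e (fun j => X (e j) j ω))) μ) :
    log (∫ ω, exp ((n.descFactorial k : ℝ)⁻¹ *
        ∑ e : Fin k ↪ Fin n, Φ e (fun j => X (e j) j ω)) ∂μ)
      ≤ (n.descFactorial (k - 1) : ℝ)⁻¹ * ∑ e : Fin k ↪ Fin n,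
          log (∫ ω, exp (((n : ℝ) - k + 1)⁻¹ * Φ e (fun j => X (e j) j ω)) ∂μ) :=
  decoupled_exp_log_ineq_general μ n k hk hkn X hmeas hindep Φ hΦ hint1
end

section
/- Let $X_1,\ldots,X_k$ be i.i.d. with law $\alpha$ and let $W : S^k \to \mathbb{R}$ be symmetric measurable with $\mathbb{E}|W(X_1,\ldots,X_k)| < \infty$. Then for every $n \ge k \ge 2$ and $\lambda > 0$, the log-moment generating function of the $U$-statistic satisfies $\frac{1}{n} \log \mathbb{E}[\exp(\lambda n U_n(W))] \le \frac{1}{k} \log \mathbb{E}[\exp(k C_k \lambda |W(X_1,\ldots,X_k)|)]$, where $C_2 = 8$ and $C_k = 2^k \prod_{j=2}^k (j^j - 1)$ for $k > 2$. -/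
open MeasureTheory ProbabilityTheory Real Filter Topology

/-- The `U`-statistic of order `k` for the kernel `Φ` and sample `x 0, …, x (n-1)`. -/
noncomputable def UStat {S : Type*} (k n : ℕ) (Φ : (Fin k → S) → ℝ) (x : ℕ → S) : ℝ :=
  ((n.descFactorial k : ℝ))⁻¹ * ∑ e : Fin k ↪ Fin n, Φ (fun j => x (e j))

/-- The de la Peña decoupling constants: `C₂ = 8` and `C_k = 2^k ∏_{j=2}^k (j^j - 1)` for
`k > 2`. -/
noncomputable def Cdec (k : ℕ) : ℝ :=
  if k = 2 then 8 else 2 ^ k * ∏ j ∈ Finset.Icc 2 k, ((j : ℝ) ^ j - 1)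

open scoped ENNReal

/-!
Hoeffding's averaging argument, in place of decoupling. Put `m = ⌊n/k⌋` and cut `{0, …, n-1}`
into `m` disjoint blocks of size `k`. Averaging over all permutations `σ` of the sample,
`U_n(W) = 𝔼_σ m⁻¹ ∑ᵢ W(X_{σ(block i)})`, so by convexity of `exp`,
`𝔼 exp(λ n U_n) ≤ 𝔼_σ 𝔼 exp(λ n/m ∑ᵢ W(X_{σ(block i)})) = (𝔼 exp(λ n/m W(X₁, …, X_k)))^m`,
the blocks being independent copies of `(X₁, …, X_k)`. It remains to use
`λ n/m ≤ 2kλ ≤ k C_k λ` and `m k ≤ n`.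
-/

theorem MulAction.card_smul_sum_smul_eq {G E M : Type*} [Group G] [Fintype G] [MulAction G E]
    [Fintype E] [MulAction.IsPretransitive G E] [AddCommMonoid M] (f : E → M) (b : E) :
    Fintype.card E • ∑ g : G, f (g • b) = Fintype.card G • ∑ e, f e := by
  have sum_smul_const : ∀ b', ∑ g : G, f (g • b') = ∑ g : G, f (g • b) := by
    intro b'
    obtain ⟨h, rfl⟩ := MulAction.exists_smul_eq G b b'
    simpa [mul_smul] using Equiv.sum_comp (Equiv.mulRight h) fun g => f (g • b)
  calc Fintype.card E • ∑ g : G, f (g • b)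
      = ∑ b' : E, ∑ g : G, f (g • b') := by simp [sum_smul_const]
    _ = ∑ g : G, ∑ e, f e := by
        rw [Finset.sum_comm]
        exact Finset.sum_congr rfl fun g _ => Equiv.sum_comp (MulAction.toPerm g) f
    _ = Fintype.card G • ∑ e, f e := by simp

instance {k n : ℕ} : MulAction.IsPretransitive (Equiv.Perm (Fin n)) (Fin k ↪ Fin n) :=
  ⟨Equiv.Perm.exists_smul_eq_embedding⟩

theorem UStat_eq_inv_factorial_mul_sum_perm {S : Type*} {k n : ℕ} (Φ : (Fin k → S) → ℝ)
    (x : ℕ → S) (b : Fin k ↪ Fin n) :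
    UStat k n Φ x = (n.factorial : ℝ)⁻¹ * ∑ σ : Equiv.Perm (Fin n), Φ (fun j => x (σ (b j))) := by
  have hcard := MulAction.card_smul_sum_smul_eq (G := Equiv.Perm (Fin n))
    (fun e : Fin k ↪ Fin n => Φ (fun j => x (e j))) b
  simp only [Function.Embedding.smul_apply, Equiv.Perm.smul_def, nsmul_eq_mul,
    Fintype.card_embedding_eq, Fintype.card_perm, Fintype.card_fin] at hcard
  have hk : k ≤ n := by simpa using Fintype.card_le_of_embedding b
  have hdesc : (n.descFactorial k : ℝ) ≠ 0 := by
    exact_mod_cast (Nat.descFactorial_pos.2 hk).ne'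
  rw [UStat]
  field_simp
  linarith

theorem UStat_eq_average_blocks {S ι : Type*} [Fintype ι] [Nonempty ι] {k n : ℕ}
    (Φ : (Fin k → S) → ℝ) (x : ℕ → S) (β : ι × Fin k ↪ Fin n) :
    UStat k n Φ x = (n.factorial : ℝ)⁻¹ * ∑ σ : Equiv.Perm (Fin n),
      (Fintype.card ι : ℝ)⁻¹ * ∑ i, Φ (fun j => x (σ (β (i, j)))) := by
  have hι : (Fintype.card ι : ℝ) ≠ 0 := by exact_mod_cast Fintype.card_ne_zero
  calc UStat k n Φ x = (Fintype.card ι : ℝ)⁻¹ * ∑ _i : ι, UStat k n Φ x := by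
        rw [Finset.sum_const, Finset.card_univ, nsmul_eq_mul, inv_mul_cancel_left₀ hι]
    _ = _ := by
        rw [Finset.sum_congr rfl fun i _ => UStat_eq_inv_factorial_mul_sum_perm Φ x
          ((Function.Embedding.sectR i _).trans β)]
        simp only [Finset.mul_sum]
        rw [Finset.sum_comm]
        refine Finset.sum_congr rfl fun σ _ => Finset.sum_congr rfl fun i _ => ?_
        simp only [Function.Embedding.trans_apply, Function.Embedding.sectR_apply]
        ring

theorem exp_mul_UStat_le_average_blocks {S ι : Type*} [Fintype ι] [Nonempty ι] {k n : ℕ}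
    (Φ : (Fin k → S) → ℝ) (x : ℕ → S) (β : ι × Fin k ↪ Fin n) (s : ℝ) :
    exp (s * UStat k n Φ x) ≤ (n.factorial : ℝ)⁻¹ * ∑ σ : Equiv.Perm (Fin n),
      exp (s / Fintype.card ι * ∑ i, Φ (fun j => x (σ (β (i, j))))) := by
  have hweights : ∑ _σ : Equiv.Perm (Fin n), (n.factorial : ℝ)⁻¹ = 1 := by
    rw [Finset.sum_const, Finset.card_univ, Fintype.card_perm, Fintype.card_fin, nsmul_eq_mul,
      mul_inv_cancel₀ (by exact_mod_cast n.factorial_ne_zero)]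
  calc exp (s * UStat k n Φ x)
      = exp (∑ σ : Equiv.Perm (Fin n), (n.factorial : ℝ)⁻¹ •
          (s / Fintype.card ι * ∑ i, Φ (fun j => x (σ (β (i, j)))))) := by
        rw [UStat_eq_average_blocks Φ x β, Finset.mul_sum, Finset.mul_sum]
        congr 1
        refine Finset.sum_congr rfl fun σ _ => ?_
        rw [smul_eq_mul]
        ring
    _ ≤ ∑ σ : Equiv.Perm (Fin n), (n.factorial : ℝ)⁻¹ •
          exp (s / Fintype.card ι * ∑ i, Φ (fun j => x (σ (β (i, j))))) :=
        convexOn_exp.map_sum_le (fun _ _ => by positivity) hweights fun _ _ => Set.mem_univ _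
    _ = _ := by simp only [smul_eq_mul, Finset.mul_sum]

section Independence

variable {Ω S κ : Type*} [MeasurableSpace Ω] [MeasurableSpace S] {μ : Measure Ω}
  {X : κ → Ω → S}

theorem ProbabilityTheory.iIndepFun.blocks {ι ι' : Type*} [Fintype ι] [Fintype ι']
    (hmeas : ∀ a, Measurable (X a)) (hindep : iIndepFun X μ) {c : ι × ι' → κ}
    (hc : Function.Injective c) :
    iIndepFun (fun i ω j => X (c (i, j)) ω) μ := by
  have := hindep.isProbabilityMeasure
  have : ∀ a, IsProbabilityMeasure (μ.map (X a)) :=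
    fun a => Measure.isProbabilityMeasure_map (hmeas a).aemeasurable
  have hblock : ∀ i, Function.Injective fun j => c (i, j) :=
    fun i j j' h => congrArg Prod.snd (hc h)
  rw [iIndepFun_iff_map_fun_eq_pi_map fun i => by fun_prop]
  have hcurry : (fun ω i j => X (c (i, j)) ω)
      = MeasurableEquiv.curry ι ι' S ∘ fun ω p => X (c p) ω := rfl
  rw [hcurry, ← Measure.map_map (by fun_prop) (by fun_prop),
    (hindep.precomp hc).map_fun_eq_pi_map fun p => (hmeas (c p)).aemeasurable,
    ← Measure.infinitePi_eq_pi, Measure.infinitePi_map_curry fun i j => μ.map (X (c (i, j))),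
    Measure.infinitePi_eq_pi]
  congr 1
  funext i
  rw [Measure.infinitePi_eq_pi, ← (hindep.precomp (hblock i)).map_fun_eq_pi_map
    fun j => (hmeas (c (i, j))).aemeasurable]

variable {α : Measure S}

theorem lintegral_comp_eq_lintegral_pi {ι : Type*} [Fintype ι] (hmeas : ∀ a, Measurable (X a))
    (hindep : iIndepFun X μ) (hlaw : ∀ a, μ.map (X a) = α) {c : ι → κ}
    (hc : Function.Injective c) {f : (ι → S) → ℝ≥0∞} (hf : Measurable f) :
    ∫⁻ ω, f (fun i => X (c i) ω) ∂μ = ∫⁻ y, f y ∂Measure.pi fun _ => α := by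
  rw [← lintegral_map hf (by fun_prop),
    (hindep.precomp hc).map_fun_eq_pi_map fun i => (hmeas (c i)).aemeasurable]
  simp only [hlaw]

theorem lintegral_prod_blocks_eq_pow {ι ι' : Type*} [Fintype ι] [Fintype ι']
    (hmeas : ∀ a, Measurable (X a)) (hindep : iIndepFun X μ) (hlaw : ∀ a, μ.map (X a) = α)
    {c : ι × ι' → κ} (hc : Function.Injective c) {f : (ι' → S) → ℝ≥0∞} (hf : Measurable f) :
    ∫⁻ ω, ∏ i, f (fun j => X (c (i, j)) ω) ∂μ
      = (∫⁻ y, f y ∂Measure.pi fun _ => α) ^ Fintype.card ι := by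
  rw [lintegral_prod_eq_prod_lintegral_of_indepFun Finset.univ
    (fun i ω => f (fun j => X (c (i, j)) ω))
    ((hindep.blocks hmeas hc).comp (fun _ => f) fun _ => hf) fun i => by fun_prop,
    Finset.prod_congr rfl fun i _ => lintegral_comp_eq_lintegral_pi hmeas hindep hlaw
    (fun j j' h => congrArg Prod.snd (hc h)) hf, Finset.prod_const, Finset.card_univ]

end Independence

theorem lintegral_exp_mul_UStat_le {Ω S ι : Type*} [MeasurableSpace Ω] [MeasurableSpace S]
    [Fintype ι] [Nonempty ι] {μ : Measure Ω} {α : Measure S} {X : ℕ → Ω → S}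
    (hmeas : ∀ i, Measurable (X i)) (hindep : iIndepFun X μ) (hlaw : ∀ i, μ.map (X i) = α)
    {k n : ℕ} (β : ι × Fin k ↪ Fin n) {W : (Fin k → S) → ℝ} (hW : Measurable W) (s : ℝ) :
    ∫⁻ ω, ENNReal.ofReal (exp (s * UStat k n W (fun i => X i ω))) ∂μ
      ≤ (∫⁻ ω, ENNReal.ofReal (exp (s / Fintype.card ι * W (fun j => X j ω))) ∂μ)
          ^ Fintype.card ι := by
  set t := s / Fintype.card ι
  set F := ∫⁻ ω, ENNReal.ofReal (exp (t * W (fun j => X j ω))) ∂μ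
  have hF : F = ∫⁻ y, ENNReal.ofReal (exp (t * W y)) ∂Measure.pi fun _ => α :=
    lintegral_comp_eq_lintegral_pi hmeas hindep hlaw Fin.val_injective
      (f := fun y => ENNReal.ofReal (exp (t * W y))) (by fun_prop)
  have hperm : ∀ σ : Equiv.Perm (Fin n), ∫⁻ ω, ENNReal.ofReal
      (exp (t * ∑ i, W (fun j => X (σ (β (i, j))) ω))) ∂μ = F ^ Fintype.card ι := by
    intro σ
    have hc : Function.Injective fun p => (σ (β p) : ℕ) :=
      Fin.val_injective.comp (σ.injective.comp β.injective)
    rw [hF, ← lintegral_prod_blocks_eq_pow hmeas hindep hlaw hc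
      (f := fun y => ENNReal.ofReal (exp (t * W y))) (by fun_prop)]
    refine lintegral_congr fun ω => ?_
    rw [Finset.mul_sum, exp_sum, ENNReal.ofReal_prod_of_nonneg fun _ _ => (exp_pos _).le]
  calc ∫⁻ ω, ENNReal.ofReal (exp (s * UStat k n W (fun i => X i ω))) ∂μ
      ≤ ∫⁻ ω, ENNReal.ofReal ((n.factorial : ℝ)⁻¹ * ∑ σ : Equiv.Perm (Fin n),
          exp (t * ∑ i, W (fun j => X (σ (β (i, j))) ω))) ∂μ :=
        lintegral_mono fun ω => ENNReal.ofReal_le_ofReal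
          (exp_mul_UStat_le_average_blocks W (fun i => X i ω) β s)
    _ = (n.factorial : ℝ≥0∞)⁻¹ * ∑ σ : Equiv.Perm (Fin n), ∫⁻ ω, ENNReal.ofReal
          (exp (t * ∑ i, W (fun j => X (σ (β (i, j))) ω))) ∂μ := by
        simp_rw [ENNReal.ofReal_mul (by positivity : (0 : ℝ) ≤ (n.factorial : ℝ)⁻¹),
          ENNReal.ofReal_sum_of_nonneg fun _ _ => (exp_pos _).le]
        rw [lintegral_const_mul _ (by fun_prop), lintegral_finsetSum _ fun _ _ => by fun_prop,
          ENNReal.ofReal_inv_of_pos (by positivity), ENNReal.ofReal_natCast]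
    _ = F ^ Fintype.card ι := by
        rw [Finset.sum_congr rfl fun σ _ => hperm σ, Finset.sum_const, Finset.card_univ,
          Fintype.card_perm, Fintype.card_fin, nsmul_eq_mul, ← mul_assoc,
          ENNReal.inv_mul_cancel (by exact_mod_cast n.factorial_ne_zero) (by simp), one_mul]

theorem two_le_Cdec {k : ℕ} (hk : 1 ≤ k) : 2 ≤ Cdec k := by
  unfold Cdec
  split_ifs
  · norm_num
  have hprod : 1 ≤ ∏ j ∈ Finset.Icc 2 k, ((j : ℝ) ^ j - 1) := by
    refine Finset.one_le_prod fun j hj => ?_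
    have hj : 2 ≤ j := (Finset.mem_Icc.1 hj).1
    have : (2 : ℝ) ≤ (j : ℝ) ^ j :=
      calc (2 : ℝ) ≤ j := by exact_mod_cast hj
        _ = (j : ℝ) ^ 1 := (pow_one _).symm
        _ ≤ (j : ℝ) ^ j := pow_le_pow_right₀ (by exact_mod_cast (by omega : 1 ≤ j)) (by omega)
    linarith
  calc (2 : ℝ) = 2 ^ 1 := (pow_one 2).symm
    _ ≤ 2 ^ k := pow_le_pow_right₀ one_le_two hk
    _ ≤ 2 ^ k * ∏ j ∈ Finset.Icc 2 k, ((j : ℝ) ^ j - 1) :=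
        le_mul_of_one_le_right (by positivity) hprod

theorem inv_mul_log_le_inv_mul_log_of_le_pow {I R : ℝ≥0∞} {m k n : ℕ} (hR : 1 ≤ R)
    (hI : I ≤ R ^ m) (hmkn : m * k ≤ n) (hk : 0 < k) :
    (((n : ℝ)⁻¹ : ℝ) : EReal) * ENNReal.log I ≤ (((k : ℝ)⁻¹ : ℝ) : EReal) * ENNReal.log R := by
  have hlogR : 0 ≤ ENNReal.log R := ENNReal.log_one ▸ ENNReal.log_monotone hR
  have hratio : (n : ℝ)⁻¹ * m ≤ (k : ℝ)⁻¹ := by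
    rcases n.eq_zero_or_pos with rfl | hn
    · simp
    rw [inv_mul_le_iff₀ (by positivity), ← div_eq_mul_inv, le_div_iff₀ (by positivity)]
    exact_mod_cast hmkn
  calc (((n : ℝ)⁻¹ : ℝ) : EReal) * ENNReal.log I
      ≤ (((n : ℝ)⁻¹ : ℝ) : EReal) * ENNReal.log (R ^ m) :=
        mul_le_mul_of_nonneg_left (ENNReal.log_monotone hI) (by simp)
    _ = (((n : ℝ)⁻¹ * m : ℝ) : EReal) * ENNReal.log R := by
        rw [ENNReal.log_pow, ← mul_assoc, EReal.coe_mul, EReal.coe_coe_eq_natCast]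
    _ ≤ (((k : ℝ)⁻¹ : ℝ) : EReal) * ENNReal.log R :=
        mul_le_mul_of_nonneg_right (EReal.coe_le_coe_iff.2 hratio) hlogR

theorem Nat.cast_div_cast_div_le_two_mul {n k : ℕ} (hk : 0 < k) (hkn : k ≤ n) :
    (n : ℝ) / (n / k : ℕ) ≤ 2 * k := by
  have hm : 0 < n / k := Nat.div_pos hkn hk
  have hn : n ≤ 2 * (n / k * k) := by
    have : n < n / k * k + k := Nat.lt_div_mul_add hk
    have := Nat.le_mul_of_pos_left k hm
    omega
  rw [div_le_iff₀ (by positivity)]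
  calc (n : ℝ) ≤ (2 * (n / k * k) : ℕ) := by exact_mod_cast hn
    _ = 2 * k * (n / k : ℕ) := by push_cast; ring

section ExpAbs

variable {Ω : Type*} [MeasurableSpace Ω] {μ : Measure Ω}

theorem lintegral_ofReal_exp_mul_le_abs (Y : Ω → ℝ) {t T : ℝ} (ht : 0 ≤ t) (htT : t ≤ T) :
    ∫⁻ ω, ENNReal.ofReal (exp (t * Y ω)) ∂μ ≤ ∫⁻ ω, ENNReal.ofReal (exp (T * |Y ω|)) ∂μ :=
  lintegral_mono fun _ => ENNReal.ofReal_le_ofReal <| exp_le_exp.2 <|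
    (mul_le_mul_of_nonneg_left (le_abs_self _) ht).trans
      (mul_le_mul_of_nonneg_right htT (abs_nonneg _))

theorem one_le_lintegral_ofReal_exp_mul_abs [IsProbabilityMeasure μ] (Y : Ω → ℝ) {T : ℝ}
    (hT : 0 ≤ T) : 1 ≤ ∫⁻ ω, ENNReal.ofReal (exp (T * |Y ω|)) ∂μ :=
  calc (1 : ℝ≥0∞) = ∫⁻ _ω, 1 ∂μ := by simp
    _ ≤ _ := lintegral_mono fun _ => by
      rw [ENNReal.one_le_ofReal, one_le_exp_iff]
      positivity

end ExpAbs

theorem ustat_logmgf_bound_general {Ω S : Type*} [MeasurableSpace Ω] [MeasurableSpace S]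
    (μ : Measure Ω) [IsProbabilityMeasure μ] (α : Measure S)
    (X : ℕ → Ω → S) (hmeas : ∀ i, Measurable (X i))
    (hindep : iIndepFun X μ)
    (hlaw : ∀ i, Measure.map (X i) μ = α)
    (k : ℕ) (hk : 2 ≤ k) (W : (Fin k → S) → ℝ) (hWmeas : Measurable W)
    (n : ℕ) (hn : k ≤ n) (lam : ℝ) (hlam : 0 < lam) :
    (((n : ℝ)⁻¹ : ℝ) : EReal) * ENNReal.log
        (∫⁻ ω, ENNReal.ofReal (exp (lam * n * UStat k n W (fun i => X i ω))) ∂μ)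
      ≤ (((k : ℝ)⁻¹ : ℝ) : EReal) * ENNReal.log
        (∫⁻ ω, ENNReal.ofReal (exp (k * Cdec k * lam * |W (fun j => X j ω)|)) ∂μ) := by
  have hk0 : 0 < k := by omega
  set m := n / k
  have hmk : m * k ≤ n := Nat.div_mul_le_self n k
  have : Nonempty (Fin m) := ⟨⟨0, Nat.div_pos hn hk0⟩⟩
  have hI := lintegral_exp_mul_UStat_le hmeas hindep hlaw
    (finProdFinEquiv.toEmbedding.trans (Fin.castLEEmb hmk)) hWmeas (lam * n)
  rw [Fintype.card_fin] at hI
  have hrate : lam * n / m ≤ k * Cdec k * lam :=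
    calc lam * n / m = lam * (n / m) := mul_div_assoc _ _ _
      _ ≤ lam * (2 * k) := by gcongr; exact Nat.cast_div_cast_div_le_two_mul hk0 hn
      _ = 2 * k * lam := by ring
      _ ≤ Cdec k * k * lam := by gcongr; exact two_le_Cdec (by omega)
      _ = k * Cdec k * lam := by ring
  have hFR := lintegral_ofReal_exp_mul_le_abs (μ := μ) (fun ω => W fun j => X j ω)
    (by positivity) hrate
  exact inv_mul_log_le_inv_mul_log_of_le_pow
    (one_le_lintegral_ofReal_exp_mul_abs _ ((by positivity : 0 ≤ lam * n / m).trans hrate))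
    (hI.trans (pow_le_pow_left' hFR m)) hmk hk0

/-- Key lemma: if `X₁, X₂, …` are i.i.d. with law `α` and `W` is a symmetric measurable
kernel with `E|W(X₁,…,X_k)| < ∞`, then for all `n ≥ k ≥ 2` and `λ > 0`, the log-moment
generating function of the `U`-statistic satisfies
`(1/n) log E[exp(λ n U_n(W))] ≤ (1/k) log E[exp(k C_k λ |W(X₁,…,X_k)|)]`. -/
theorem ustat_logmgf_bound {Ω S : Type*} [MeasurableSpace Ω] [MeasurableSpace S]
    (μ : Measure Ω) [IsProbabilityMeasure μ] (α : Measure S)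
    (X : ℕ → Ω → S) (hmeas : ∀ i, Measurable (X i))
    (hindep : iIndepFun X μ)
    (hlaw : ∀ i, Measure.map (X i) μ = α)
    (k : ℕ) (hk : 2 ≤ k) (W : (Fin k → S) → ℝ) (hWmeas : Measurable W)
    (hsymm : ∀ (σ : Equiv.Perm (Fin k)) (y : Fin k → S), W (y ∘ σ) = W y)
    (hint : Integrable (fun ω => W (fun j => X j ω)) μ)
    (n : ℕ) (hn : k ≤ n) (lam : ℝ) (hlam : 0 < lam) :
    (((n : ℝ)⁻¹ : ℝ) : EReal) * ENNReal.log
        (∫⁻ ω, ENNReal.ofReal (exp (lam * n * UStat k n W (fun i => X i ω))) ∂μ)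
      ≤ (((k : ℝ)⁻¹ : ℝ) : EReal) * ENNReal.log
        (∫⁻ ω, ENNReal.ofReal (exp (k * Cdec k * lam * |W (fun j => X j ω)|)) ∂μ) :=
  ustat_logmgf_bound_general μ α X hmeas hindep hlaw k hk W hWmeas n hn lam hlam
end

section
/- Let $(X_i)$ be i.i.d. with law $\alpha$ and $W : S^k \to \mathbb{R}$ symmetric measurable satisfying $\mathbb{E}[\exp(\lambda |W(X_1,\ldots,X_k)|)] < \infty$ for all $\lambda > 0$. Then there exists a sequence of bounded continuous symmetric functions $(W_m)_{m\ge 1}$ on $S^k$ such that $\log \mathbb{E}[\exp(\lambda |W - W_m|(X_1,\ldots,X_k))] \to 0$ as $m \to \infty$ for every $\lambda > 0$. -/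
/-!
Truncate `W` at level `m`, approximate the truncation in `L¹` by a continuous function bounded by
`m` to within `exp (-m²)`, and average that approximant over the permutations of the coordinates;
averaging keeps the `L¹` error because `W` and the product measure are permutation invariant.
The error `W - Wₘ` splits into the tail `W - clip m W`, whose exponential moments tend to `1` by
dominated convergence, and a part bounded by `2m` with `L¹` norm at most `exp (-m²)`, whose
exponential moment is at most `1 + λ exp (2λm - m²)`. Since `exp (-m²)` beats every `exp (2λm)`,
one sequence works for all `λ`, and `exp (a + b) ≤ (exp 2a + exp 2b) / 2` combines the two parts.
-/

open MeasureTheory Real Filter Topology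
open scoped BigOperators

def clip (M w : ℝ) : ℝ := max (min w M) (-M)

@[fun_prop]
lemma continuous_clip (M : ℝ) : Continuous (clip M) :=
  (continuous_id.min continuous_const).max continuous_const

lemma abs_clip_le {M : ℝ} (hM : 0 ≤ M) (w : ℝ) : |clip M w| ≤ M :=
  abs_le.2 ⟨le_max_right _ _, max_le (min_le_right _ _) (by linarith)⟩

lemma clip_eq_self {M w : ℝ} (h : |w| ≤ M) : clip M w = w := by
  rw [abs_le] at h
  rw [clip, min_eq_left h.2, max_eq_left h.1]

lemma abs_clip_sub_clip_le (M a b : ℝ) : |clip M a - clip M b| ≤ |a - b| :=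
  (abs_max_sub_max_le_abs _ _ _).trans <| (abs_min_sub_min_le_max _ _ _ _).trans <| by simp

lemma abs_sub_clip_le {M : ℝ} (hM : 0 ≤ M) (w : ℝ) : |w - clip M w| ≤ |w| := by
  unfold clip
  rcases le_total 0 w with hw | hw
  · rw [max_eq_left (le_min (by linarith) (by linarith)), abs_of_nonneg hw, abs_le]
    constructor <;> linarith [min_le_left w M, le_min hw hM]
  · rw [min_eq_left (hw.trans hM), abs_of_nonpos hw, abs_le]
    constructor <;> linarith [le_max_left w (-M), max_le hw (neg_nonpos.2 hM)]

lemma exp_le_one_add_mul_exp {t T : ℝ} (ht : 0 ≤ t) (htT : t ≤ T) : exp t ≤ 1 + t * exp T := by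
  have h : (1 - t) * exp t ≤ 1 := by
    simpa [← exp_add] using mul_le_mul_of_nonneg_right
      (by linarith [add_one_le_exp (-t)] : 1 - t ≤ exp (-t)) (exp_pos t).le
  nlinarith [mul_le_mul_of_nonneg_left (exp_le_exp.2 htT) ht]

lemma exp_add_le_avg_exp_two_mul (a b : ℝ) : exp (a + b) ≤ (exp (2 * a) + exp (2 * b)) / 2 := by
  rw [exp_add, two_mul a, two_mul b, exp_add, exp_add]
  nlinarith [two_mul_le_add_sq (exp a) (exp b)]

section ExpMoments

variable {X : Type*} [MeasurableSpace X] {μ : Measure X} [IsProbabilityMeasure μ]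

lemma one_le_integral_exp {g : X → ℝ} (hg : ∀ x, 0 ≤ g x)
    (hint : Integrable (fun x => exp (g x)) μ) : 1 ≤ ∫ x, exp (g x) ∂μ := by
  simpa using integral_mono (integrable_const 1) hint fun x => one_le_exp (hg x)

lemma integrable_exp_mul_abs_of_abs_le {f : X → ℝ} (hf : AEStronglyMeasurable f μ) {T : ℝ}
    (hT : ∀ x, |f x| ≤ T) (lam : ℝ) : Integrable (fun x => exp (lam * |f x|)) μ :=
  Integrable.of_bound (by fun_prop) (exp (|lam| * T)) <| ae_of_all _ fun x => by
    rw [norm_of_nonneg (exp_pos _).le, exp_le_exp]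
    exact (le_abs_self _).trans <| by
      rw [abs_mul, abs_abs]; exact mul_le_mul_of_nonneg_left (hT x) (abs_nonneg lam)

lemma integral_exp_mul_abs_le {f : X → ℝ} (hf : AEStronglyMeasurable f μ) {T lam : ℝ}
    (hT : ∀ x, |f x| ≤ T) (hlam : 0 ≤ lam) :
    ∫ x, exp (lam * |f x|) ∂μ ≤ 1 + lam * exp (lam * T) * ∫ x, |f x| ∂μ := by
  have habs : Integrable (fun x => |f x|) μ :=
    Integrable.of_bound hf.norm T (ae_of_all _ fun x => by simpa using hT x)
  have hpt : ∀ x, exp (lam * |f x|) ≤ 1 + lam * exp (lam * T) * |f x| := fun x => by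
    have := exp_le_one_add_mul_exp (by positivity) (mul_le_mul_of_nonneg_left (hT x) hlam)
    linarith
  calc ∫ x, exp (lam * |f x|) ∂μ ≤ ∫ x, (1 + lam * exp (lam * T) * |f x|) ∂μ :=
        integral_mono_of_nonneg (ae_of_all _ fun _ => (exp_pos _).le)
          ((integrable_const 1).add (habs.const_mul _)) (ae_of_all _ hpt)
    _ = 1 + lam * exp (lam * T) * ∫ x, |f x| ∂μ := by
        rw [integral_add (integrable_const 1) (habs.const_mul _), integral_const_mul]
        simp

lemma tendsto_integral_exp_mul_abs_sub_clip {f : X → ℝ} (hf : AEStronglyMeasurable f μ)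
    {lam : ℝ} (hlam : 0 ≤ lam) (hexp : Integrable (fun x => exp (lam * |f x|)) μ) :
    Tendsto (fun m : ℕ => ∫ x, exp (lam * |f x - clip m (f x)|) ∂μ) atTop (𝓝 1) := by
  have hlim : ∀ x, Tendsto (fun m : ℕ => exp (lam * |f x - clip m (f x)|)) atTop (𝓝 1) :=
    fun x => tendsto_const_nhds.congr' <| (eventually_ge_atTop ⌈|f x|⌉₊).mono fun m hm => by
      dsimp only
      rw [clip_eq_self ((Nat.le_ceil _).trans (Nat.cast_le.2 hm))]
      simp
  simpa using tendsto_integral_of_dominated_convergence _ (fun m => by fun_prop) hexp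
    (fun m => ae_of_all _ fun x => by
      rw [norm_of_nonneg (exp_pos _).le, exp_le_exp]
      exact mul_le_mul_of_nonneg_left (abs_sub_clip_le m.cast_nonneg _) hlam)
    (ae_of_all _ hlim)

lemma tendsto_integral_exp_mul_abs_of_integral_abs_le {h : ℕ → X → ℝ}
    (hmeas : ∀ m, AEStronglyMeasurable (h m) μ) {c : ℝ} (hbound : ∀ m x, |h m x| ≤ c * m)
    (hL1 : ∀ m : ℕ, ∫ x, |h m x| ∂μ ≤ exp (-(m : ℝ) ^ 2)) {lam : ℝ} (hlam : 0 ≤ lam) :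
    Tendsto (fun m => ∫ x, exp (lam * |h m x|) ∂μ) atTop (𝓝 1) := by
  have hupper : ∀ m : ℕ, ∫ x, exp (lam * |h m x|) ∂μ ≤ 1 + lam * exp (m * (lam * c - m)) :=
    fun m => calc
      _ ≤ 1 + lam * exp (lam * (c * m)) * ∫ x, |h m x| ∂μ :=
          integral_exp_mul_abs_le (hmeas m) (hbound m) hlam
      _ ≤ 1 + lam * exp (lam * (c * m)) * exp (-(m : ℝ) ^ 2) := by gcongr; exact hL1 m
      _ = 1 + lam * exp (m * (lam * c - m)) := by rw [mul_assoc lam, ← exp_add]; congr 3; ring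
  have hdecay : Tendsto (fun m : ℕ => exp (m * (lam * c - m))) atTop (𝓝 0) :=
    tendsto_exp_atBot.comp <| tendsto_natCast_atTop_atTop.atTop_mul_atBot₀ <|
      tendsto_atBot_add_const_left _ _ <| tendsto_neg_atTop_atBot.comp tendsto_natCast_atTop_atTop
  refine tendsto_of_tendsto_of_tendsto_of_le_of_le tendsto_const_nhds
    (by simpa using (hdecay.const_mul lam).const_add 1) (fun m => ?_) hupper
  exact one_le_integral_exp (fun x => by positivity)
    (integrable_exp_mul_abs_of_abs_le (hmeas m) (hbound m) lam)

lemma tendsto_integral_exp_mul_abs_of_abs_le_add {F G H : ℕ → X → ℝ}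
    (hH : ∀ m, AEStronglyMeasurable (H m) μ) (hle : ∀ m x, |H m x| ≤ |F m x| + |G m x|)
    {lam : ℝ} (hlam : 0 ≤ lam)
    (hF : Tendsto (fun m => ∫ x, exp (2 * lam * |F m x|) ∂μ) atTop (𝓝 1))
    (hG : Tendsto (fun m => ∫ x, exp (2 * lam * |G m x|) ∂μ) atTop (𝓝 1)) :
    Tendsto (fun m => ∫ x, exp (lam * |H m x|) ∂μ) atTop (𝓝 1) := by
  -- An integral tending to `1` is eventually not the junk value `0` of a non-integrable function.
  have hint : ∀ {K : ℕ → X → ℝ}, Tendsto (fun m => ∫ x, exp (2 * lam * |K m x|) ∂μ) atTop (𝓝 1) →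
      ∀ᶠ m in atTop, Integrable (fun x => exp (2 * lam * |K m x|)) μ := fun hK =>
    (hK.eventually_ne one_ne_zero).mono fun _ hm => by_contra fun h => hm (integral_undef h)
  have hpt : ∀ m x, exp (lam * |H m x|)
      ≤ (exp (2 * lam * |F m x|) + exp (2 * lam * |G m x|)) / 2 := fun m x =>
    (exp_le_exp.2 (mul_le_mul_of_nonneg_left (hle m x) hlam)).trans <| by
      simpa only [mul_add, mul_assoc] using
        exp_add_le_avg_exp_two_mul (lam * |F m x|) (lam * |G m x|)
  have hbounds : ∀ᶠ m in atTop, 1 ≤ ∫ x, exp (lam * |H m x|) ∂μ ∧ ∫ x, exp (lam * |H m x|) ∂μ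
      ≤ ((∫ x, exp (2 * lam * |F m x|) ∂μ) + ∫ x, exp (2 * lam * |G m x|) ∂μ) / 2 := by
    filter_upwards [hint hF, hint hG] with m hFm hGm
    have hsum := (hFm.add hGm).div_const 2
    have hHm : Integrable (fun x => exp (lam * |H m x|)) μ :=
      hsum.mono' (by fun_prop) (ae_of_all _ fun x => by
        rw [norm_of_nonneg (exp_pos _).le]; exact hpt m x)
    refine ⟨one_le_integral_exp (fun x => by positivity) hHm, ?_⟩
    rw [← integral_add hFm hGm, ← integral_div]
    exact integral_mono hHm hsum (hpt m)
  exact tendsto_of_tendsto_of_tendsto_of_le_of_le' tendsto_const_nhds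
    (by simpa using (hF.add hG).div_const 2) (hbounds.mono fun _ => And.left)
    (hbounds.mono fun _ => And.right)

end ExpMoments

lemma exists_continuous_abs_le_integral_abs_sub_le {X : Type*} [TopologicalSpace X]
    [NormalSpace X] [MeasurableSpace X] [BorelSpace X] {μ : Measure X} [IsFiniteMeasure μ]
    [μ.WeaklyRegular] {f : X → ℝ} (hf : AEStronglyMeasurable f μ) {M : ℝ}
    (hM : ∀ x, |f x| ≤ M) {ε : ℝ} (hε : 0 < ε) :
    ∃ g : X → ℝ, Continuous g ∧ (∀ x, |g x| ≤ M) ∧ ∫ x, |f x - g x| ∂μ ≤ ε := by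
  have hfint : Integrable f μ := Integrable.of_bound hf M (ae_of_all _ hM)
  obtain ⟨g, hfg, hg⟩ := hfint.exists_boundedContinuous_integral_sub_le hε
  refine ⟨fun x => clip M (g x), by fun_prop,
    fun x => abs_clip_le ((abs_nonneg _).trans (hM x)) _, le_trans ?_ hfg⟩
  refine integral_mono_of_nonneg (ae_of_all _ fun _ => abs_nonneg _) (hfint.sub hg).norm
    (ae_of_all _ fun x => ?_)
  calc |f x - clip M (g x)| = |clip M (f x) - clip M (g x)| := by rw [clip_eq_self (hM x)]
    _ ≤ ‖f x - g x‖ := abs_clip_sub_clip_le _ _ _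

section PermInvariance

variable {S ι : Type*} [MeasurableSpace S]

lemma coe_piCongrLeft_perm_symm (σ : Equiv.Perm ι) :
    ⇑(MeasurableEquiv.piCongrLeft (fun _ : ι => S) σ.symm) = fun y => y ∘ σ := by
  ext y i
  simp [MeasurableEquiv.coe_piCongrLeft, Equiv.piCongrLeft_apply]

variable [Fintype ι] {ν : Measure S} [SigmaFinite ν]

lemma integral_comp_perm (σ : Equiv.Perm ι) (f : (ι → S) → ℝ) :
    ∫ y, f (y ∘ σ) ∂Measure.pi (fun _ => ν) = ∫ y, f y ∂Measure.pi (fun _ => ν) := by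
  simpa [coe_piCongrLeft_perm_symm] using
    (measurePreserving_piCongrLeft (fun _ : ι => ν) σ.symm).integral_comp' f

lemma MeasureTheory.Integrable.comp_perm {f : (ι → S) → ℝ}
    (hf : Integrable f (Measure.pi fun _ => ν)) (σ : Equiv.Perm ι) :
    Integrable (fun y => f (y ∘ σ)) (Measure.pi fun _ => ν) := by
  have := ((measurePreserving_piCongrLeft (fun _ : ι => ν) σ.symm).integrable_comp_emb
    (MeasurableEquiv.measurableEmbedding _)).2 hf
  rwa [coe_piCongrLeft_perm_symm] at this

end PermInvariance

section Symmetrize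

variable {S ι : Type*} [Fintype ι] [DecidableEq ι]

noncomputable def symmetrize (f : (ι → S) → ℝ) (y : ι → S) : ℝ := 𝔼 σ : Equiv.Perm ι, f (y ∘ σ)

lemma symmetrize_eq_sum_div (f : (ι → S) → ℝ) :
    symmetrize f = fun y => (∑ σ : Equiv.Perm ι, f (y ∘ σ)) / Fintype.card (Equiv.Perm ι) :=
  funext fun _ => Fintype.expect_eq_sum_div_card _

lemma symmetrize_comp_perm (f : (ι → S) → ℝ) (τ : Equiv.Perm ι) (y : ι → S) :
    symmetrize f (y ∘ τ) = symmetrize f y :=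
  Fintype.expect_equiv (Equiv.mulLeft τ) _ _ fun _ => rfl

lemma symmetrize_sub_of_comp_perm {f : (ι → S) → ℝ}
    (hf : ∀ (σ : Equiv.Perm ι) y, f (y ∘ σ) = f y) (g : (ι → S) → ℝ) (y : ι → S) :
    f y - symmetrize g y = symmetrize (fun z => f z - g z) y := by
  simp [symmetrize, Finset.expect_sub_distrib, hf]

lemma abs_symmetrize_le_of_abs_le {f : (ι → S) → ℝ} {C : ℝ} (hf : ∀ y, |f y| ≤ C)
    (y : ι → S) : |symmetrize f y| ≤ C :=
  (Finset.abs_expect_le _ _).trans <|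
    (Finset.expect_le_expect fun _ _ => hf _).trans (Fintype.expect_const C).le

lemma Continuous.symmetrize [TopologicalSpace S] {f : (ι → S) → ℝ} (hf : Continuous f) :
    Continuous (symmetrize f) := by
  rw [symmetrize_eq_sum_div]
  fun_prop

variable [MeasurableSpace S] {ν : Measure S} [SigmaFinite ν]

lemma MeasureTheory.Integrable.symmetrize {f : (ι → S) → ℝ}
    (hf : Integrable f (Measure.pi fun _ => ν)) :
    Integrable (symmetrize f) (Measure.pi fun _ => ν) := by
  rw [symmetrize_eq_sum_div]
  exact (integrable_finsetSum _ fun σ _ => hf.comp_perm σ).div_const _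

lemma integral_symmetrize {f : (ι → S) → ℝ} (hf : Integrable f (Measure.pi fun _ => ν)) :
    ∫ y, symmetrize f y ∂Measure.pi (fun _ => ν) = ∫ y, f y ∂Measure.pi (fun _ => ν) := by
  rw [symmetrize_eq_sum_div, integral_div, integral_finsetSum _ fun σ _ => hf.comp_perm σ]
  simp only [integral_comp_perm, Finset.sum_const, Finset.card_univ, nsmul_eq_mul]
  field_simp

lemma integral_abs_sub_symmetrize_le {f g : (ι → S) → ℝ}
    (hf : ∀ (σ : Equiv.Perm ι) y, f (y ∘ σ) = f y)
    (hfg : Integrable (fun y => f y - g y) (Measure.pi fun _ => ν)) :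
    ∫ y, |f y - symmetrize g y| ∂Measure.pi (fun _ => ν)
      ≤ ∫ y, |f y - g y| ∂Measure.pi (fun _ => ν) :=
  calc _ ≤ ∫ y, symmetrize (fun z => |f z - g z|) y ∂Measure.pi (fun _ => ν) :=
        integral_mono_of_nonneg (ae_of_all _ fun _ => abs_nonneg _) hfg.abs.symmetrize
          (ae_of_all _ fun y => by
            dsimp only
            rw [symmetrize_sub_of_comp_perm hf]
            exact Finset.abs_expect_le _ _)
    _ = _ := integral_symmetrize hfg.abs

end Symmetrize

lemma exists_continuous_symmetric_abs_le_integral_abs_sub_le {S ι : Type*} [Fintype ι]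
    [DecidableEq ι] [TopologicalSpace S] [PolishSpace S] [MeasurableSpace S] [BorelSpace S]
    (ν : Measure S) [IsFiniteMeasure ν] {f : (ι → S) → ℝ}
    (hf : AEStronglyMeasurable f (Measure.pi fun _ => ν))
    (hf_symm : ∀ (σ : Equiv.Perm ι) y, f (y ∘ σ) = f y) {M : ℝ} (hM : ∀ y, |f y| ≤ M)
    {ε : ℝ} (hε : 0 < ε) :
    ∃ g : (ι → S) → ℝ, Continuous g ∧ (∀ y, |g y| ≤ M) ∧
      (∀ (σ : Equiv.Perm ι) y, g (y ∘ σ) = g y) ∧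
      ∫ y, |f y - g y| ∂Measure.pi (fun _ => ν) ≤ ε := by
  obtain ⟨g, hg_cont, hg_bound, hfg⟩ := exists_continuous_abs_le_integral_abs_sub_le hf hM hε
  have hfg_int : Integrable (fun y => f y - g y) (Measure.pi fun _ => ν) :=
    Integrable.of_bound (hf.sub hg_cont.aestronglyMeasurable) (2 * M) <| ae_of_all _ fun y => by
      rw [norm_eq_abs]
      linarith [abs_sub (f y) (g y), hM y, hg_bound y]
  exact ⟨symmetrize g, hg_cont.symmetrize, abs_symmetrize_le_of_abs_le hg_bound,
    symmetrize_comp_perm g, (integral_abs_sub_symmetrize_le hf_symm hfg_int).trans hfg⟩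

theorem exists_boundedContinuous_exp_approx_general {S : Type*} [MeasurableSpace S]
    [TopologicalSpace S] [PolishSpace S] [BorelSpace S]
    (α : Measure S) [IsProbabilityMeasure α]
    (k : ℕ) (W : (Fin k → S) → ℝ) (hWmeas : Measurable W)
    (hsymm : ∀ (σ : Equiv.Perm (Fin k)) (y : Fin k → S), W (y ∘ σ) = W y)
    (hexp : ∀ lam : ℝ, 0 < lam →
      Integrable (fun x => exp (lam * |W x|)) (Measure.pi fun _ : Fin k => α)) :
    ∃ Wm : ℕ → (Fin k → S) → ℝ,
      (∀ m, Continuous (Wm m)) ∧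
      (∀ m, ∃ C : ℝ, ∀ y, |Wm m y| ≤ C) ∧
      (∀ m (σ : Equiv.Perm (Fin k)) (y : Fin k → S), Wm m (y ∘ σ) = Wm m y) ∧
      (∀ lam : ℝ, 0 < lam →
        Tendsto (fun m =>
            log (∫ x, exp (lam * |W x - Wm m x|) ∂(Measure.pi fun _ : Fin k => α)))
          atTop (𝓝 0)) := by
  set μ := Measure.pi fun _ : Fin k => α
  have hW : AEStronglyMeasurable W μ := hWmeas.aestronglyMeasurable
  have hclipW : ∀ m : ℕ, AEStronglyMeasurable (fun y => clip m (W y)) μ := fun m =>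
    (continuous_clip _).comp_aestronglyMeasurable hW
  choose g hg_cont hg_bound hg_symm hg_L1 using fun m : ℕ =>
    exists_continuous_symmetric_abs_le_integral_abs_sub_le α (hclipW m)
      (fun σ y => by rw [hsymm]) (fun _ => abs_clip_le m.cast_nonneg _)
      (exp_pos (-(m : ℝ) ^ 2))
  refine ⟨g, hg_cont, fun m => ⟨m, hg_bound m⟩, hg_symm, fun lam hlam => ?_⟩
  have hclose := tendsto_integral_exp_mul_abs_of_abs_le_add
    (F := fun m y => W y - clip m (W y)) (G := fun m y => clip m (W y) - g m y)
    (fun m => hW.sub (hg_cont m).aestronglyMeasurable) (fun m y => abs_sub_le _ _ _) hlam.le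
    (tendsto_integral_exp_mul_abs_sub_clip hW (by positivity) (hexp _ (by positivity)))
    (tendsto_integral_exp_mul_abs_of_integral_abs_le
      (h := fun m y => clip m (W y) - g m y) (c := 2)
      (fun m => (hclipW m).sub (hg_cont m).aestronglyMeasurable)
      (fun m y => by
        linarith [abs_sub (clip m (W y)) (g m y), abs_clip_le m.cast_nonneg (W y), hg_bound m y])
      hg_L1 (by positivity))
  simpa [Function.comp_def] using (continuousAt_log one_ne_zero).tendsto.comp hclose

/-- Exponential approximation by bounded continuous kernels: if `W : S^k → ℝ` is symmetric
measurable with `E[exp(λ|W(X₁,…,X_k)|)] < ∞` for all `λ > 0` (the `X_i` i.i.d. of law `α`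
on a Polish space `S`), then there is a sequence `(W_m)` of bounded continuous symmetric
functions on `S^k` with `log E[exp(λ|W - W_m|(X₁,…,X_k))] → 0` as `m → ∞`, for every
`λ > 0`. -/
theorem exists_boundedContinuous_exp_approx {S : Type*} [MeasurableSpace S]
    [TopologicalSpace S] [PolishSpace S] [BorelSpace S]
    (α : Measure S) [IsProbabilityMeasure α]
    (k : ℕ) (hk : 1 ≤ k) (W : (Fin k → S) → ℝ) (hWmeas : Measurable W)
    (hsymm : ∀ (σ : Equiv.Perm (Fin k)) (y : Fin k → S), W (y ∘ σ) = W y)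
    (hexp : ∀ lam : ℝ, 0 < lam →
      Integrable (fun x => exp (lam * |W x|)) (Measure.pi fun _ : Fin k => α)) :
    ∃ Wm : ℕ → (Fin k → S) → ℝ,
      (∀ m, Continuous (Wm m)) ∧
      (∀ m, ∃ C : ℝ, ∀ y, |Wm m y| ≤ C) ∧
      (∀ m (σ : Equiv.Perm (Fin k)) (y : Fin k → S), Wm m (y ∘ σ) = Wm m y) ∧
      (∀ lam : ℝ, 0 < lam →
        Tendsto (fun m =>
            log (∫ x, exp (lam * |W x - Wm m x|) ∂(Measure.pi fun _ : Fin k => α)))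
          atTop (𝓝 0)) :=
  exists_boundedContinuous_exp_approx_general α k W hWmeas hsymm hexp
end
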